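/- arXiv:2602.17651 — 3 statements merged into one kernel-verified Lean document; each statement's English description precedes it below -/
import Mathlib

section
/- Let m be a positive natural number, p ∈ [0,1] a real number, and let X_1, …, X_m be independent Bernoulli(p) random variables on a probability space, with X := Σ_{i=1}^m X_i. Then for every real δ with 0 < δ < 1, the probability that X ≥ (1+δ)·m·p is at most exp(−δ²·m·p/3). -/
/-!
Chernoff's method with `t = log (1 + δ)`: by Markov's inequality applied to `exp (t * X)`,
the tail is at most `exp (-t (1 + δ) m p) * 𝔼[exp (t * X)]`; by independence the moment
generating function factors, and each Bernoulli factor `1 + p (eᵗ - 1)` is at most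
`exp (p (eᵗ - 1))`. This leaves the exponent `m p (δ - (1 + δ) log (1 + δ))`, which is at most
`-δ² m p / 3` because `log (1 + δ) ≥ 2δ / (2 + δ)`.
-/

open MeasureTheory ProbabilityTheory Real

lemma Real.add_sq_div_three_le_one_add_mul_log {δ : ℝ} (h0 : 0 ≤ δ) (h1 : δ ≤ 1) :
    δ + δ ^ 2 / 3 ≤ (1 + δ) * log (1 + δ) :=
  calc δ + δ ^ 2 / 3 ≤ (1 + δ) * (2 * δ / (δ + 2)) := by
        rw [mul_div_assoc', le_div_iff₀ (by linarith)]
        nlinarith [mul_nonneg (sq_nonneg δ) (sub_nonneg.2 h1)]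
    _ ≤ (1 + δ) * log (1 + δ) := by gcongr; exact le_log_one_add_of_nonneg h0

namespace ProbabilityTheory

lemma exp_mul_eq_one_add_indicator {Ω : Type*} {X : Ω → ℝ} (hX : ∀ ω, X ω = 0 ∨ X ω = 1)
    (t : ℝ) :
    (fun ω => exp (t * X ω)) = fun ω => 1 + {ω | X ω = 1}.indicator (fun _ => exp t - 1) ω := by
  funext ω
  rcases hX ω with h | h <;> simp [h]

section ZeroOne

variable {Ω : Type*} [MeasurableSpace Ω] {μ : Measure Ω}

lemma integrable_exp_mul_of_zero_or_one [IsFiniteMeasure μ] {X : Ω → ℝ} (hmeas : Measurable X)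
    (hX : ∀ ω, X ω = 0 ∨ X ω = 1) (t : ℝ) : Integrable (fun ω => exp (t * X ω)) μ := by
  rw [exp_mul_eq_one_add_indicator hX]
  exact (integrable_const 1).add
    ((integrable_const _).indicator (hmeas (measurableSet_singleton 1)))

lemma mgf_of_zero_or_one [IsProbabilityMeasure μ] {X : Ω → ℝ} (hmeas : Measurable X)
    (hX : ∀ ω, X ω = 0 ∨ X ω = 1) {p : ℝ} (hp : 0 ≤ p) (hX1 : μ {ω | X ω = 1} = ENNReal.ofReal p)
    (t : ℝ) : mgf X μ t = 1 + p * (exp t - 1) := by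
  have hS : MeasurableSet {ω | X ω = 1} := hmeas (measurableSet_singleton 1)
  rw [mgf, exp_mul_eq_one_add_indicator hX,
    integral_add (integrable_const 1) ((integrable_const _).indicator hS),
    integral_indicator_const _ hS, measureReal_def, hX1, ENNReal.toReal_ofReal hp]
  simp

variable {ι : Type*} [Fintype ι] [IsProbabilityMeasure μ] {X : ι → Ω → ℝ} {p : ℝ}

lemma mgf_sum_le_of_zero_or_one (hindep : iIndepFun X μ) (hmeas : ∀ i, Measurable (X i))
    (hX : ∀ i ω, X i ω = 0 ∨ X i ω = 1) (hp : 0 ≤ p)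
    (hX1 : ∀ i, μ {ω | X i ω = 1} = ENNReal.ofReal p) (t : ℝ) :
    mgf (∑ i, X i) μ t ≤ exp (Fintype.card ι * p * (exp t - 1)) :=
  calc mgf (∑ i, X i) μ t = ∏ i, mgf (X i) μ t := hindep.mgf_sum hmeas _
    _ ≤ ∏ _i : ι, exp (p * (exp t - 1)) := by
        refine Finset.prod_le_prod (fun i _ => mgf_nonneg) fun i _ => ?_
        rw [mgf_of_zero_or_one (hmeas i) (hX i) hp (hX1 i), add_comm]
        exact add_one_le_exp _
    _ = exp (Fintype.card ι * p * (exp t - 1)) := by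
        rw [← exp_sum, Finset.sum_const, Finset.card_univ, nsmul_eq_mul, mul_assoc]

lemma measureReal_sum_ge_le_of_zero_or_one (hindep : iIndepFun X μ)
    (hmeas : ∀ i, Measurable (X i)) (hX : ∀ i ω, X i ω = 0 ∨ X i ω = 1) (hp : 0 ≤ p)
    (hX1 : ∀ i, μ {ω | X i ω = 1} = ENNReal.ofReal p) (a : ℝ) {t : ℝ} (ht : 0 ≤ t) :
    μ.real {ω | a ≤ ∑ i, X i ω} ≤ exp (-t * a + Fintype.card ι * p * (exp t - 1)) := by
  have hint := hindep.integrable_exp_mul_sum hmeas (s := Finset.univ)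
    fun i _ => integrable_exp_mul_of_zero_or_one (hmeas i) (hX i) t
  have hmarkov := measure_ge_le_exp_mul_mgf a ht hint
  simp only [Finset.sum_apply] at hmarkov
  calc μ.real {ω | a ≤ ∑ i, X i ω} ≤ exp (-t * a) * mgf (∑ i, X i) μ t := hmarkov
    _ ≤ exp (-t * a) * exp (Fintype.card ι * p * (exp t - 1)) := by
        gcongr; exact mgf_sum_le_of_zero_or_one hindep hmeas hX hp hX1 t
    _ = exp (-t * a + Fintype.card ι * p * (exp t - 1)) := (exp_add _ _).symm

end ZeroOne

end ProbabilityTheory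

theorem chernoff_mult_upper_general
    {Ω : Type*} [MeasurableSpace Ω] (μ : Measure Ω) [IsProbabilityMeasure μ]
    (m : ℕ) (p : ℝ) (hp0 : 0 ≤ p)
    (X : Fin m → Ω → ℝ)
    (hmeas : ∀ i, Measurable (X i))
    (hindep : iIndepFun X μ)
    (hval : ∀ i, ∀ ω, X i ω = 0 ∨ X i ω = 1)
    (hbern : ∀ i, μ {ω | X i ω = 1} = ENNReal.ofReal p)
    (δ : ℝ) (hδ0 : 0 < δ) (hδ1 : δ < 1) :
    μ {ω | (1 + δ) * m * p ≤ ∑ i, X i ω}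
      ≤ ENNReal.ofReal (Real.exp (-(δ ^ 2 * m * p) / 3)) := by
  rw [ENNReal.le_ofReal_iff_toReal_le (measure_ne_top μ _) (exp_nonneg _), ← measureReal_def]
  refine (measureReal_sum_ge_le_of_zero_or_one hindep hmeas hval hp0 hbern _
    (log_nonneg (by linarith : (1 : ℝ) ≤ 1 + δ))).trans (exp_le_exp.2 ?_)
  have hlog := mul_le_mul_of_nonneg_left (add_sq_div_three_le_one_add_mul_log hδ0.le hδ1.le)
    (by positivity : (0 : ℝ) ≤ m * p)
  rw [exp_log (by linarith), Fintype.card_fin]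
  linarith

/-- Multiplicative upper-tail Chernoff bound for sums of independent Bernoulli(p)
random variables (Theorem 3.6, part 1). -/
theorem chernoff_mult_upper
    {Ω : Type*} [MeasurableSpace Ω] (μ : Measure Ω) [IsProbabilityMeasure μ]
    (m : ℕ) (hm : 0 < m) (p : ℝ) (hp0 : 0 ≤ p) (hp1 : p ≤ 1)
    (X : Fin m → Ω → ℝ)
    (hmeas : ∀ i, Measurable (X i))
    (hindep : iIndepFun X μ)
    (hval : ∀ i, ∀ ω, X i ω = 0 ∨ X i ω = 1)
    (hbern : ∀ i, μ {ω | X i ω = 1} = ENNReal.ofReal p)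
    (δ : ℝ) (hδ0 : 0 < δ) (hδ1 : δ < 1) :
    μ {ω | (1 + δ) * m * p ≤ ∑ i, X i ω}
      ≤ ENNReal.ofReal (Real.exp (-(δ ^ 2 * m * p) / 3)) :=
  chernoff_mult_upper_general μ m p hp0 X hmeas hindep hval hbern δ hδ0 hδ1
end

section
/- Let m be a positive natural number, p ∈ [0,1] a real number, and let X_1, …, X_m be independent Bernoulli(p) random variables on a probability space, with X := Σ_{i=1}^m X_i. Then for every real δ with 0 < δ < 1, the probability that X ≤ (1−δ)·m·p is at most exp(−δ²·m·p/2). -/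
/-!
Chernoff's method at `t = log (1 - δ)`: a Bernoulli(p) variable has moment generating function
`1 + p (eᵗ - 1) ≤ exp (p (eᵗ - 1))`, so by independence the sum has mgf at most
`exp (m p (eᵗ - 1))`, and Markov's inequality for `exp (t X)` bounds the lower tail by
`exp (-m p ((1 - δ) log (1 - δ) + δ))`. The exponent is controlled by
`(1 - δ) log (1 - δ) ≥ -δ + δ² / 2`, which is `sinh (log x) ≤ log x` at `x = 1 - δ ≤ 1`.
-/

open MeasureTheory ProbabilityTheory Real

lemma Real.sub_inv_div_two_le_log {x : ℝ} (hx0 : 0 < x) (hx1 : x ≤ 1) :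
    (x - x⁻¹) / 2 ≤ log x := by
  rw [← sinh_log hx0]
  exact sinh_le_self_iff.2 (log_nonpos hx0.le hx1)

lemma neg_add_sq_div_two_le_one_sub_mul_log_one_sub {δ : ℝ} (hδ0 : 0 ≤ δ) (hδ1 : δ < 1) :
    -δ + δ ^ 2 / 2 ≤ (1 - δ) * log (1 - δ) := by
  have h1δ : 0 < 1 - δ := by linarith
  calc -δ + δ ^ 2 / 2 = (1 - δ) * (((1 - δ) - (1 - δ)⁻¹) / 2) := by field_simp; ring
    _ ≤ (1 - δ) * log (1 - δ) := by
      gcongr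
      exact Real.sub_inv_div_two_le_log h1δ (by linarith)

namespace ProbabilityTheory

variable {Ω : Type*} [MeasurableSpace Ω] {μ : Measure Ω} [IsProbabilityMeasure μ]

lemma mgf_of_forall_eq_zero_or_eq_one {X : Ω → ℝ} (hX : Measurable X)
    (hval : ∀ ω, X ω = 0 ∨ X ω = 1) (t : ℝ) :
    mgf X μ t = 1 + (exp t - 1) * μ.real {ω | X ω = 1} := by
  set s := {ω | X ω = 1}
  have hs : MeasurableSet s := hX (measurableSet_singleton 1)
  have hexp : (fun ω => exp (t * X ω)) = fun ω => 1 + (exp t - 1) * s.indicator 1 ω := by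
    funext ω
    rcases hval ω with h | h <;> simp [s, h]
  rw [mgf, hexp, integral_add (integrable_const 1) ((integrable_indicator_iff hs).2
    (integrable_const 1).integrableOn |>.const_mul _), integral_const_mul,
    integral_indicator_one hs]
  simp

lemma iIndepFun.mgf_sum_le_of_forall_eq_zero_or_eq_one {ι : Type*} {X : ι → Ω → ℝ}
    (hindep : iIndepFun X μ) (hmeas : ∀ i, Measurable (X i))
    (hval : ∀ i ω, X i ω = 0 ∨ X i ω = 1) (s : Finset ι) (t : ℝ) :
    mgf (∑ i ∈ s, X i) μ t ≤ exp ((∑ i ∈ s, μ.real {ω | X i ω = 1}) * (exp t - 1)) := by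
  rw [hindep.mgf_sum hmeas, Finset.sum_mul, exp_sum]
  refine Finset.prod_le_prod (fun i _ => mgf_nonneg) fun i _ => ?_
  rw [mgf_of_forall_eq_zero_or_eq_one (hmeas i) (hval i)]
  linarith [add_one_le_exp (μ.real {ω | X i ω = 1} * (exp t - 1))]

end ProbabilityTheory

lemma measure_le_one_sub_mul_le_of_mgf_le {Ω : Type*} [MeasurableSpace Ω] {μ : Measure Ω}
    [IsFiniteMeasure μ] {S : Ω → ℝ} {M δ : ℝ} (hM : 0 ≤ M) (hδ0 : 0 ≤ δ) (hδ1 : δ < 1)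
    (h_int : ∀ t ≤ 0, Integrable (fun ω => exp (t * S ω)) μ)
    (h_mgf : ∀ t ≤ 0, mgf S μ t ≤ exp (M * (exp t - 1))) :
    μ.real {ω | S ω ≤ (1 - δ) * M} ≤ exp (-(δ ^ 2 * M) / 2) := by
  have h1δ : 0 < 1 - δ := by linarith
  have h_log := neg_add_sq_div_two_le_one_sub_mul_log_one_sub hδ0 hδ1
  set t := log (1 - δ)
  have ht : t ≤ 0 := log_nonpos h1δ.le (by linarith)
  have ht_exp : exp t = 1 - δ := exp_log h1δ
  calc μ.real {ω | S ω ≤ (1 - δ) * M}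
      ≤ exp (-t * ((1 - δ) * M)) * mgf S μ t := measure_le_le_exp_mul_mgf _ ht (h_int t ht)
    _ ≤ exp (-t * ((1 - δ) * M)) * exp (M * (exp t - 1)) := by gcongr; exact h_mgf t ht
    _ = exp (-((1 - δ) * t + δ) * M) := by rw [← exp_add, ht_exp]; ring_nf
    _ ≤ exp (-(δ ^ 2 * M) / 2) := by gcongr; nlinarith

theorem chernoff_mult_lower_general
    {Ω : Type*} [MeasurableSpace Ω] (μ : Measure Ω) [IsProbabilityMeasure μ]
    (m : ℕ) (p : ℝ) (hp0 : 0 ≤ p)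
    (X : Fin m → Ω → ℝ)
    (hmeas : ∀ i, Measurable (X i))
    (hindep : iIndepFun X μ)
    (hval : ∀ i, ∀ ω, X i ω = 0 ∨ X i ω = 1)
    (hbern : ∀ i, μ {ω | X i ω = 1} = ENNReal.ofReal p)
    (δ : ℝ) (hδ0 : 0 < δ) (hδ1 : δ < 1) :
    μ {ω | ∑ i, X i ω ≤ (1 - δ) * m * p}
      ≤ ENNReal.ofReal (Real.exp (-(δ ^ 2 * m * p) / 2)) := by
  have hmean : ∑ i, μ.real {ω | X i ω = 1} = m * p := by
    simp [measureReal_def, hbern, hp0]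
  have h_int : ∀ t, Integrable (fun ω => exp (t * (∑ i, X i) ω)) μ := fun t =>
    hindep.integrable_exp_mul_sum hmeas fun i _ => integrable_exp_mul_of_mem_Icc (a := 0) (b := 1)
      (hmeas i).aemeasurable (ae_of_all _ fun ω => by rcases hval i ω with h | h <;> simp [h])
  have h_mgf (t : ℝ) : mgf (∑ i, X i) μ t ≤ exp (m * p * (exp t - 1)) := by
    simpa [hmean] using hindep.mgf_sum_le_of_forall_eq_zero_or_eq_one hmeas hval .univ t
  have h_tail := measure_le_one_sub_mul_le_of_mgf_le (by positivity) hδ0.le hδ1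
    (fun t _ => h_int t) (fun t _ => h_mgf t)
  rw [ENNReal.le_ofReal_iff_toReal_le (measure_ne_top μ _) (exp_pos _).le]
  simpa [mul_assoc, Finset.sum_apply, measureReal_def] using h_tail

/-- Multiplicative lower-tail Chernoff bound for sums of independent Bernoulli(p)
random variables (Theorem 3.6, part 2). -/
theorem chernoff_mult_lower
    {Ω : Type*} [MeasurableSpace Ω] (μ : Measure Ω) [IsProbabilityMeasure μ]
    (m : ℕ) (hm : 0 < m) (p : ℝ) (hp0 : 0 ≤ p) (hp1 : p ≤ 1)
    (X : Fin m → Ω → ℝ)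
    (hmeas : ∀ i, Measurable (X i))
    (hindep : iIndepFun X μ)
    (hval : ∀ i, ∀ ω, X i ω = 0 ∨ X i ω = 1)
    (hbern : ∀ i, μ {ω | X i ω = 1} = ENNReal.ofReal p)
    (δ : ℝ) (hδ0 : 0 < δ) (hδ1 : δ < 1) :
    μ {ω | ∑ i, X i ω ≤ (1 - δ) * m * p}
      ≤ ENNReal.ofReal (Real.exp (-(δ ^ 2 * m * p) / 2)) :=
  chernoff_mult_lower_general μ m p hp0 X hmeas hindep hval hbern δ hδ0 hδ1
end

section
/- Fix a real number ε with 0 ≤ ε ≤ 1. Let G be the probability mass function on Bool assigning probability 1−ε to false and ε to true, and let D be the probability mass function on Bool × Bool assigning probability 1−ε to (false, false), probability ε to (false, true), and probability 0 to all other pairs. Then: (i) the first coordinate of a sample from D equals false with probability 1, so the conditional distribution of D given that its first coordinate equals false is D itself; and (ii) when c is sampled from G and (c′, π) is sampled independently from D, the probability that c = false and π = false equals (1−ε)². -/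
/-! The simulator's distribution `D` is supported on `{crs = false}`, so conditioning on that
event changes nothing. Sampling `c ← G` and then `(c', π) ← D` independently gives a product
distribution, so the acceptance event `c = false ∧ π = false` has probability
`G false · D(π = false) = (1 - ε) · (1 - ε)`. -/

namespace PMF

variable {α β : Type*}

theorem filter_eq_self_of_support_subset {p : PMF α} {s : Set α} (hs : p.support ⊆ s)
    (h : ∃ a ∈ s, a ∈ p.support) : p.filter s h = p := by
  have hind : s.indicator p = p := Set.indicator_eq_self.mpr hs
  ext a
  rw [filter_apply, hind, tsum_coe, inv_one, mul_one]

theorem toOuterMeasure_bind_map_prodMk_prod (p : PMF α) (q : PMF β) (s : Set α) (t : Set β) :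
    (p.bind fun a => q.map (Prod.mk a)).toOuterMeasure (s ×ˢ t)
      = p.toOuterMeasure s * q.toOuterMeasure t := by
  classical
  simp only [toOuterMeasure_bind_apply, toOuterMeasure_map_apply,
    Set.mk_preimage_prod_right_eq_if, toOuterMeasure_apply p, ← ENNReal.tsum_mul_right]
  refine tsum_congr fun a => ?_
  by_cases ha : a ∈ s <;> simp [ha]

theorem toMeasure_bind_map_prodMk_prod [MeasurableSpace α] [MeasurableSpace β]
    (p : PMF α) (q : PMF β) {s : Set α} {t : Set β} (hs : MeasurableSet s)
    (ht : MeasurableSet t) :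
    (p.bind fun a => q.map (Prod.mk a)).toMeasure (s ×ˢ t) = p.toMeasure s * q.toMeasure t := by
  rw [toMeasure_apply_eq_toOuterMeasure_apply _ (hs.prod ht),
    toMeasure_apply_eq_toOuterMeasure_apply _ hs, toMeasure_apply_eq_toOuterMeasure_apply _ ht,
    toOuterMeasure_bind_map_prodMk_prod]

end PMF

theorem counterexample_nizk_general
    (ε : ℝ) (hε1 : ε ≤ 1)
    (G : PMF Bool) (D : PMF (Bool × Bool))
    (hGf : G false = ENNReal.ofReal (1 - ε))
    (hDff : D (false, false) = ENNReal.ofReal (1 - ε))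
    (hDtf : D (true, false) = 0) (hDtt : D (true, true) = 0) :
    D.toMeasure {x | x.1 = false} = 1
      ∧ (∀ h : ∃ a ∈ {x : Bool × Bool | x.1 = false}, a ∈ D.support,
          D.filter {x | x.1 = false} h = D)
      ∧ (G.bind fun c => D.map fun d => (c, d)).toMeasure
          {x : Bool × Bool × Bool | x.1 = false ∧ x.2.2 = false}
          = ENNReal.ofReal ((1 - ε) ^ 2) := by
  have hsupp : D.support ⊆ {x | x.1 = false} := by
    rintro ⟨_ | _, _ | _⟩ hx <;> simp_all [PMF.mem_support_iff]
  have hevent : {x : Bool × Bool × Bool | x.1 = false ∧ x.2.2 = false}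
      = {false} ×ˢ {y | y.2 = false} := by
    ext; simp
  have hsecond : D.toMeasure {y | y.2 = false} = ENNReal.ofReal (1 - ε) := by
    simp [PMF.toMeasure_apply_fintype, Fintype.sum_prod_type, hDff, hDtf]
  refine ⟨(D.toMeasure_apply_eq_one_iff .of_discrete).mpr hsupp,
    PMF.filter_eq_self_of_support_subset hsupp, ?_⟩
  rw [hevent, PMF.toMeasure_bind_map_prodMk_prod _ _ .of_discrete .of_discrete,
    PMF.toMeasure_apply_singleton _ _ .of_discrete, hGf, hsecond,
    ENNReal.ofReal_pow (by linarith), sq]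

/-- Counterexample computation from Section 2.2: for the contrived NIZK where Gen
outputs crs = true with probability ε and the simulator outputs (false, false) with
probability 1−ε and (false, true) with probability ε, (i) the simulator's crs is
false with probability 1, so conditioning the simulator on crs = false does nothing,
and (ii) the OW deciding algorithm accepts with probability exactly (1−ε)². -/
theorem counterexample_nizk
    (ε : ℝ) (hε0 : 0 ≤ ε) (hε1 : ε ≤ 1)
    (G : PMF Bool) (D : PMF (Bool × Bool))
    (hGf : G false = ENNReal.ofReal (1 - ε)) (hGt : G true = ENNReal.ofReal ε)
    (hDff : D (false, false) = ENNReal.ofReal (1 - ε))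
    (hDft : D (false, true) = ENNReal.ofReal ε)
    (hDtf : D (true, false) = 0) (hDtt : D (true, true) = 0) :
    D.toMeasure {x | x.1 = false} = 1
      ∧ (∀ h : ∃ a ∈ {x : Bool × Bool | x.1 = false}, a ∈ D.support,
          D.filter {x | x.1 = false} h = D)
      ∧ (G.bind fun c => D.map fun d => (c, d)).toMeasure
          {x : Bool × Bool × Bool | x.1 = false ∧ x.2.2 = false}
          = ENNReal.ofReal ((1 - ε) ^ 2) :=
  counterexample_nizk_general ε hε1 G D hGf hDff hDtf hDtt
end
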